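/- Assume the nondegeneracy condition A(t) ≥ c* t² I for |t| ≤ t⁰ (c* > 0). Suppose N̂_{0,Q} = 0 and 𝒩̂_Q^{(q)} ≠ 0 for some q ∈ {1,…,p}, i.e., in the eigenvalue expansions λ_l(t) = γ_l t² + μ_l t³ + ν_l t⁴ + … of A(t) one has μ_l = 0 for all l while ν_j ≠ 0 for some j. Let s ≥ 2. Then there does not exist a positive function C(τ) with lim_{τ→∞} C(τ)/|τ|^{1/2} = 0 such that ‖M e^{-iτε^{-2}A(t)} M^{-1} P̂ − M₀ e^{-iτε^{-2}t²M₀ŜM₀} M₀^{-1} P̂‖ · ε^{s}(t²+ε²)^{-s/2} ≤ C(τ)ε holds for all τ ∈ ℝ and all sufficiently small |t| and ε > 0. -/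

import Mathlib

/-!
Birman–Suslina abstract operator-theoretic scheme.

`BSScheme` encodes: complex separable Hilbert spaces `H`, `Hs`; a densely defined
closed operator `X₀ : H → Hs`; a bounded operator `X₁`; the family
`X(t) = X₀ + t X₁` and the selfadjoint nonnegative operator family
`A(t) = X(t)* X(t)` (encoded through its quadratic form); the kernel
`𝔑 = Ker A(0) = Ker X₀` of finite dimension `n` with `n ≤ dim Ker X₀*`;
the orthogonal projections `P`, `P*` onto `𝔑` and `𝔑* = Ker X₀* = (Ran X₀)ᗮ`;
the spectral gap data `0 < 8δ < d⁰` (the point `0` is isolated in the spectrum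
of `A₀`); the operator `Z` (solving the weak problem `X₀*(X₀ ψ + X₁ ω) = 0`);
and the unitary group `E t τ = e^{-iτ A(t)}` generated by `A(t)`.
-/

noncomputable section

open ContinuousLinearMap

structure BSScheme where
  H : Type
  Hs : Type
  [instH₁ : NormedAddCommGroup H]
  [instH₂ : InnerProductSpace ℂ H]
  [instH₃ : CompleteSpace H]
  [instHs₁ : NormedAddCommGroup Hs]
  [instHs₂ : InnerProductSpace ℂ Hs]
  [instHs₃ : CompleteSpace Hs]
  /-- densely defined closed operator `X₀` -/
  X₀ : H →ₗ.[ℂ] Hs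
  X₀_dense : Dense (X₀.domain : Set H)
  X₀_closed : IsClosed (X₀.graph : Set (H × Hs))
  /-- bounded operator `X₁` -/
  X₁ : H →L[ℂ] Hs
  n : ℕ
  n_pos : 0 < n
  /-- the kernel `𝔑 = Ker X₀ = Ker A(0)` -/
  ker : Submodule ℂ H
  ker_def : ∀ u : H, u ∈ ker ↔ ∃ hu : u ∈ X₀.domain, X₀ ⟨u, hu⟩ = 0
  ker_findim : FiniteDimensional ℂ ker
  ker_rank : Module.finrank ℂ ker = n
  /-- the kernel `𝔑* = Ker X₀* = (Ran X₀)ᗮ` -/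
  kerStar : Submodule ℂ Hs
  kerStar_def : ∀ v : Hs, v ∈ kerStar ↔ ∀ u : X₀.domain, (inner ℂ (X₀ u) v : ℂ) = 0
  rank_le : (n : Cardinal) ≤ Module.rank ℂ kerStar
  /-- the orthogonal projection onto `𝔑` -/
  P : H →L[ℂ] H
  P_mem : ∀ u, P u ∈ ker
  P_fix : ∀ u ∈ ker, P u = u
  P_sa : IsSelfAdjoint P
  /-- the orthogonal projection onto `𝔑*` -/
  Pstar : Hs →L[ℂ] Hs
  Pstar_mem : ∀ v, Pstar v ∈ kerStar
  Pstar_fix : ∀ v ∈ kerStar, Pstar v = v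
  Pstar_sa : IsSelfAdjoint Pstar
  /-- `d⁰` is the distance from the isolated spectral point `0` to the rest of the
  spectrum of `A₀`: the form `‖X₀ u‖²` is `≥ d⁰‖u‖²` on `𝔑ᗮ` -/
  d0 : ℝ
  δ : ℝ
  δ_pos : 0 < δ
  gap : ∀ u : X₀.domain, (u : H) ∈ kerᗮ → d0 * ‖(u : H)‖ ^ 2 ≤ ‖X₀ u‖ ^ 2
  δ_small : 8 * δ < d0
  /-- the selfadjoint operator family `A(t) = X(t)* X(t)` generated by the closed
  quadratic form `‖X(t)u‖²`, `u ∈ Dom X₀` -/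
  A : ℝ → (H →ₗ.[ℂ] H)
  A_dense : ∀ t, Dense ((A t).domain : Set H)
  A_dom : ∀ t, (A t).domain ≤ X₀.domain
  A_form : ∀ (t : ℝ) (u : (A t).domain) (v : X₀.domain),
    (inner ℂ ((A t) u) (v : H) : ℂ) =
      inner ℂ (X₀ ⟨(u : H), A_dom t u.2⟩ + t • X₁ (u : H)) (X₀ v + t • X₁ (v : H))
  /-- the operator `Z`: `Z u = ψ(Pu)` where `ψ ∈ Dom X₀ ∩ 𝔑ᗮ` is the weak solution
  of `X₀*(X₀ ψ + X₁ ω) = 0`, `ω = Pu` -/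
  Z : H →L[ℂ] H
  Z_proj : ∀ u : H, Z (P u) = Z u
  Z_dom : ∀ u : H, Z u ∈ X₀.domain
  Z_perp : ∀ u : H, Z u ∈ kerᗮ
  Z_sol : ∀ (u : H) (v : X₀.domain),
    (inner ℂ (X₀ ⟨Z u, Z_dom u⟩ + X₁ (P u)) (X₀ v) : ℂ) = 0
  /-- `E t τ = e^{-iτ A(t)}`: the unitary group generated by `A(t)` -/
  E : ℝ → ℝ → (H →L[ℂ] H)
  E_zero : ∀ t, E t 0 = ContinuousLinearMap.id ℂ H
  E_group : ∀ t τ σ, E t (τ + σ) = (E t τ).comp (E t σ)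
  E_isometry : ∀ t τ u, ‖E t τ u‖ = ‖u‖
  E_gen : ∀ (t τ : ℝ) (u : (A t).domain),
    HasDerivAt (fun s : ℝ => E t s (u : H))
      (-(Complex.I • (E t τ ((A t) u)))) τ

attribute [instance] BSScheme.instH₁ BSScheme.instH₂ BSScheme.instH₃
attribute [instance] BSScheme.instHs₁ BSScheme.instHs₂ BSScheme.instHs₃

namespace BSScheme

variable (S : BSScheme)

/-- `t⁰ = δ^{1/2} ‖X₁‖⁻¹` -/
def t0 : ℝ := Real.sqrt S.δ / ‖S.X₁‖

/-- `R P = P* X₁ P` -/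
def RP : S.H →L[ℂ] S.Hs := S.Pstar ∘L S.X₁ ∘L S.P

/-- the spectral germ `S = P X₁* P* X₁ |_𝔑`, extended by zero to `H`
(the operator `S P`) -/
def germ : S.H →L[ℂ] S.H :=
  S.P ∘L (ContinuousLinearMap.adjoint S.X₁) ∘L S.Pstar ∘L S.X₁ ∘L S.P

/-- the operator `N = Z* X₁* R P + (R P)* X₁ Z` -/
def Nop : S.H →L[ℂ] S.H :=
  (ContinuousLinearMap.adjoint (S.X₁ ∘L S.Z)) ∘L S.RP
    + (ContinuousLinearMap.adjoint S.RP) ∘L (S.X₁ ∘L S.Z)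

end BSScheme

/-!  Analytic branches of eigenvalues and eigenvectors of `A(t)` near `t = 0`:
for `|t| ≤ t_*` the eigenvalues of `A(t)` in `[0, δ]` are
`λ_l(t) = γ_l t² + μ_l t³ + ν_l t⁴ + …` with analytic orthonormal eigenvectors
`φ_l(t) = ω_l + O(t)`, where `{ω_l}` is an orthonormal basis of `𝔑`
consisting of eigenvectors of the germ: `S ω_l = γ_l ω_l`. -/
structure SpecData (S : BSScheme) where
  tstar : ℝ
  tstar_pos : 0 < tstar
  lam : Fin S.n → ℝ → ℝ
  φ : Fin S.n → ℝ → S.H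
  ω : Fin S.n → S.H
  γ : Fin S.n → ℝ
  μ : Fin S.n → ℝ
  ν : Fin S.n → ℝ
  ω_mem : ∀ l, ω l ∈ S.ker
  ω_orthonormal : Orthonormal ℂ ω
  germ_eig : ∀ l, S.germ (ω l) = (γ l : ℂ) • ω l
  φ_orthonormal : ∀ t : ℝ, |t| ≤ tstar → Orthonormal ℂ (fun l => φ l t)
  φ_eig : ∀ (l) (t : ℝ), |t| ≤ tstar →
    ∃ hd : φ l t ∈ (S.A t).domain, (S.A t) ⟨φ l t, hd⟩ = (lam l t : ℂ) • φ l t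
  lam_nonneg : ∀ l t, |t| ≤ tstar → 0 ≤ lam l t
  lam_le : ∀ l t, |t| ≤ tstar → lam l t ≤ S.δ
  φ_expansion : ∃ c : ℝ, ∀ (l) (t : ℝ), |t| ≤ tstar → ‖φ l t - ω l‖ ≤ c * |t|
  lam_expansion : ∃ c : ℝ, ∀ (l) (t : ℝ), |t| ≤ tstar →
    |lam l t - (γ l * t ^ 2 + μ l * t ^ 3 + ν l * t ^ 4)| ≤ c * |t| ^ 5

namespace SpecData

variable {S : BSScheme} (SD : SpecData S)

/-- the rank-one projection `( ·, x) x` -/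
noncomputable def rkOne (x : S.H) : S.H →L[ℂ] S.H := (innerSL ℂ x).smulRight x

/-- the orthogonal projection onto the eigenspace of the germ `S`
corresponding to the eigenvalue `a` (zero if `a` is not an eigenvalue) -/
noncomputable def eigProj (a : ℝ) : S.H →L[ℂ] S.H :=
  letI := Classical.decEq ℝ
  ∑ l : Fin S.n, if SD.γ l = a then SpecData.rkOne (SD.ω l) else 0

/-- the operator `N₀ = Σ_l μ_l ( ·, ω_l) ω_l` (the diagonal part of `N`) -/
noncomputable def N0op : S.H →L[ℂ] S.H :=
  ∑ l : Fin S.n, (SD.μ l : ℂ) • SpecData.rkOne (SD.ω l)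

end SpecData

/-! The sandwiched scheme: a second family `Â(t) = X̂(t)* X̂(t)` in a Hilbert
space `Ĥ`, together with an isomorphism `M : H → Ĥ` with `M Dom X₀ = Dom X̂₀`
and `X(t) = X̂(t) M`, so that `A(t) = M* Â(t) M`.  `𝔑̂ = Ker Â₀ = M 𝔑` with
orthogonal projection `P̂`; `Ŝ` is the spectral germ of `Â(t)`;
`Q = (M M*)⁻¹`; `M₀ = (Q_𝔑̂)^{-1/2}` (encoded by the relations
`P̂ Q M₀² P̂ = P̂` on `𝔑̂`, `M₀` selfadjoint, nonnegative, commuting with `P̂`,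
with inverse `M₀⁻¹` on `𝔑̂`). -/
structure SandScheme extends BSScheme where
  Hh : Type
  [instHh₁ : NormedAddCommGroup Hh]
  [instHh₂ : InnerProductSpace ℂ Hh]
  [instHh₃ : CompleteSpace Hh]
  /-- densely defined closed operator `X̂₀` -/
  Xh₀ : Hh →ₗ.[ℂ] Hs
  Xh₀_dense : Dense (Xh₀.domain : Set Hh)
  Xh₀_closed : IsClosed (Xh₀.graph : Set (Hh × Hs))
  /-- bounded operator `X̂₁` -/
  Xh₁ : Hh →L[ℂ] Hs
  /-- the isomorphism `M : H → Ĥ` -/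
  Mm : H ≃L[ℂ] Hh
  dom_eq : ∀ u : H, u ∈ X₀.domain ↔ Mm u ∈ Xh₀.domain
  X₀_sand : ∀ u : X₀.domain, X₀ u = Xh₀ ⟨Mm u, (dom_eq u).1 u.2⟩
  X₁_sand : ∀ u : H, X₁ u = Xh₁ (Mm u)
  /-- `𝔑̂ = Ker X̂₀ = Ker Â₀` -/
  kerHat : Submodule ℂ Hh
  kerHat_def : ∀ u : Hh, u ∈ kerHat ↔ ∃ hu : u ∈ Xh₀.domain, Xh₀ ⟨u, hu⟩ = 0
  /-- the orthogonal projection `P̂` onto `𝔑̂` -/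
  Ph : Hh →L[ℂ] Hh
  Ph_mem : ∀ u, Ph u ∈ kerHat
  Ph_fix : ∀ u ∈ kerHat, Ph u = u
  Ph_sa : IsSelfAdjoint Ph
  /-- `M₀ = (Q_𝔑̂)^{-1/2}`, where `Q_𝔑̂ = P̂ Q|_𝔑̂` and `Q = (M M*)⁻¹` -/
  M₀ : Hh →L[ℂ] Hh
  M₀inv : Hh →L[ℂ] Hh
  M₀_sa : IsSelfAdjoint M₀
  M₀_nonneg : ∀ u : Hh, 0 ≤ (inner ℂ (M₀ u) u : ℂ).re
  M₀_comm : M₀ ∘L Ph = Ph ∘L M₀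
  M₀inv_comm : M₀inv ∘L Ph = Ph ∘L M₀inv
  M₀_sq : ∀ u : Hh,
    Ph ((ContinuousLinearMap.adjoint ((Mm.symm : Hh →L[ℂ] H)))
      ((Mm.symm : Hh →L[ℂ] H) (M₀ (M₀ (Ph u))))) = Ph u
  M₀_inv_left : ∀ u : Hh, M₀ (M₀inv (Ph u)) = Ph u
  M₀_inv_right : ∀ u : Hh, M₀inv (M₀ (Ph u)) = Ph u

attribute [instance] SandScheme.instHh₁ SandScheme.instHh₂ SandScheme.instHh₃

namespace SandScheme

variable (S : SandScheme)

/-- `M` as a bounded operator -/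
def Mcl : S.H →L[ℂ] S.Hh := (S.Mm : S.H →L[ℂ] S.Hh)

/-- `M⁻¹` as a bounded operator -/
def Minv : S.Hh →L[ℂ] S.H := (S.Mm.symm : S.Hh →L[ℂ] S.H)

/-- the spectral germ `Ŝ` of `Â(t)` (extended by zero, i.e. the operator `Ŝ P̂`);
here `P̂* = P*` is the orthogonal projection onto `𝔑̂* = 𝔑* = Ker X̂₀*` -/
def germHat : S.Hh →L[ℂ] S.Hh :=
  S.Ph ∘L (ContinuousLinearMap.adjoint S.Xh₁) ∘L S.Pstar ∘L S.Xh₁ ∘L S.Ph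

/-- the operator `N̂_Q = P̂ (M*)⁻¹ N M⁻¹ P̂` -/
def NhatQ : S.Hh →L[ℂ] S.Hh :=
  S.Ph ∘L (ContinuousLinearMap.adjoint S.Minv) ∘L S.Nop ∘L S.Minv ∘L S.Ph

end SandScheme

/-- the operator `N̂_{0,Q} = P̂ (M*)⁻¹ N₀ M⁻¹ P̂` -/
noncomputable def SandScheme.NhatQ0 (S : SandScheme) (SD : SpecData S.toBSScheme) :
    S.Hh →L[ℂ] S.Hh :=
  S.Ph ∘L (ContinuousLinearMap.adjoint S.Minv) ∘L SD.N0op ∘L S.Minv ∘L S.Ph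

/-!
Pick a branch `j` with `ν_j ≠ 0`, put `ε = t`, `τ = π / (|ν_j| t²)` and test the operator on
`M ω_j`. The group `e^{-iτt⁻²A(t)}` multiplies the eigenvector `φ_j(t) = ω_j + O(t)` by
`e^{-iτt⁻²λ_j(t)}`, and `M₀⁻¹ M ω_j` is an eigenvector of `M₀ŜM₀` for `γ_j`, so the operator maps
`M ω_j` to `(e^{-iτt⁻²λ_j(t)} - e^{-iτγ_j}) M ω_j + O(t)`. As `μ_j = 0`, the phase difference
`τt⁻²(λ_j(t) - γ_j t²)` is `π sign ν_j + O(t)`, so the operator has norm at least `1/2` for small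
`t`. The weight `εˢ(t² + ε²)^{-s/2}` is `2^{-s/2}`, hence `C(τ) t ≥ 2^{-s/2}/2`, whereas
`C(τ) t = C(τ) |τ|^{-1/2} √(π/|ν_j|) → 0` as `t → 0`.
-/

open Real Filter Topology

theorem Real.cos_nonpos_of_abs_sub_le_of_abs_eq_pi {x y : ℝ} (hy : |y| = π)
    (h : |x - y| ≤ π / 2) : cos x ≤ 0 := by
  have hcos : cos x = -cos (x - y) := by
    rcases (abs_eq pi_pos.le).mp hy with rfl | rfl
    · rw [cos_sub_pi, neg_neg]
    · rw [sub_neg_eq_add, cos_add_pi, neg_neg]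
  rw [hcos, neg_nonpos]
  exact cos_nonneg_of_neg_pi_div_two_le_of_le (abs_le.mp h).1 (abs_le.mp h).2

theorem Complex.one_le_norm_exp_mul_I_sub_exp_mul_I {a b : ℝ} (h : Real.cos (a - b) ≤ 0) :
    1 ≤ ‖Complex.exp (a * Complex.I) - Complex.exp (b * Complex.I)‖ := by
  have hfac : Complex.exp (a * Complex.I) - Complex.exp (b * Complex.I)
      = Complex.exp (b * Complex.I) * (Complex.exp ((a - b : ℝ) * Complex.I) - 1) := by
    rw [mul_sub, ← Complex.exp_add, mul_one]
    push_cast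
    ring_nf
  calc (1 : ℝ) ≤ |(Complex.exp ((a - b : ℝ) * Complex.I) - 1).re| := by
        rw [Complex.sub_re, Complex.exp_ofReal_mul_I_re, Complex.one_re, abs_of_nonpos (by linarith)]
        linarith
    _ ≤ ‖Complex.exp ((a - b : ℝ) * Complex.I) - 1‖ := Complex.abs_re_le_norm _
    _ = _ := by rw [hfac, norm_mul, Complex.norm_exp_ofReal_mul_I, one_mul]

theorem ContinuousLinearMap.norm_sub_le_opNorm_of_norm_apply_sub_smul_le {𝕜 E : Type*}
    [NontriviallyNormedField 𝕜] [NormedAddCommGroup E] [NormedSpace 𝕜 E]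
    {T : E →L[𝕜] E} {x : E} {z : 𝕜} {r : ℝ} (hx : x ≠ 0) (h : ‖T x - z • x‖ ≤ r * ‖x‖) :
    ‖z‖ - r ≤ ‖T‖ := by
  have hx : 0 < ‖x‖ := norm_pos_iff.mpr hx
  refine le_of_mul_le_mul_right ?_ hx
  calc (‖z‖ - r) * ‖x‖ = ‖z • x‖ - r * ‖x‖ := by rw [norm_smul]; ring
    _ ≤ ‖z • x‖ - ‖T x - z • x‖ := by linarith
    _ ≤ ‖T x‖ := by
        have : ‖z • x‖ ≤ ‖T x‖ + ‖T x - z • x‖ := by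
          simpa using norm_sub_le (T x) (T x - z • x)
        linarith
    _ ≤ ‖T‖ * ‖x‖ := T.le_opNorm x

theorem NormedSpace.exp_apply_of_apply_eq_smul {E : Type*} [NormedAddCommGroup E]
    [NormedSpace ℂ E] [CompleteSpace E] {B : E →L[ℂ] E} {x : E} {a : ℂ} (h : B x = a • x) :
    NormedSpace.exp B x = Complex.exp a • x := by
  have hpow : ∀ n : ℕ, (B ^ n) x = a ^ n • x := by
    intro n
    induction n with
    | zero => simp
    | succ n ih => rw [pow_succ', mul_apply_eq_comp, ih, map_smul, h, smul_smul, pow_succ]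
  have hB := (NormedSpace.exp_series_hasSum_exp' (𝕂 := ℂ) B).mapL (ContinuousLinearMap.apply ℂ E x)
  have ha := (NormedSpace.exp_series_hasSum_exp' (𝕂 := ℂ) a).smul_const x
  rw [Complex.exp_eq_exp_ℂ]
  refine hB.unique ?_
  convert ha using 2 with n
  simp [hpow, smul_smul]

theorem eq_cexp_mul_smul_of_hasDerivAt {E : Type*} [NormedAddCommGroup E] [NormedSpace ℂ E]
    {f : ℝ → E} {c : ℂ} (hf : ∀ σ, HasDerivAt f (c • f σ) σ) (θ : ℝ) :
    f θ = Complex.exp (θ * c) • f 0 := by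
  have hg : ∀ σ : ℝ, HasDerivAt (fun s : ℝ => Complex.exp (-(s * c)) • f s) 0 σ := by
    intro σ
    have he : HasDerivAt (fun s : ℝ => Complex.exp (-(s * c))) (Complex.exp (-(σ * c)) * -c) σ := by
      simpa using (((hasDerivAt_id σ).ofReal_comp).mul_const c).neg.cexp
    refine (he.smul (hf σ)).congr_deriv ?_
    rw [smul_smul, ← add_smul, mul_neg, add_neg_cancel, zero_smul]
  have hconst := is_const_of_deriv_eq_zero (fun σ => (hg σ).differentiableAt)
    (fun σ => (hg σ).deriv) θ 0
  simp only [Complex.ofReal_zero, zero_mul, neg_zero, Complex.exp_zero, one_smul] at hconst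
  rw [← hconst, smul_smul, ← Complex.exp_add, add_neg_cancel, Complex.exp_zero, one_smul]

theorem eventually_mul_le_nhdsGT (k : ℝ) {b : ℝ} (hb : 0 < b) :
    ∀ᶠ t in 𝓝[>] (0 : ℝ), k * t ≤ b :=
  (((continuous_const_mul k).tendsto' 0 0 (mul_zero k)).mono_left
    nhdsWithin_le_nhds).eventually_le_const hb

theorem tendsto_mul_self_of_tendsto_div_sqrt {C : ℝ → ℝ} {a : ℝ} (ha : 0 < a)
    (hC : Tendsto (fun τ => C τ / √|τ|) atTop (𝓝 0)) :
    Tendsto (fun t => C (a / t ^ 2) * t) (𝓝[>] 0) (𝓝 0) := by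
  have hτ : Tendsto (fun t : ℝ => a / t ^ 2) (𝓝[>] 0) atTop := by
    have := ((tendsto_pow_atTop two_ne_zero).comp tendsto_inv_nhdsGT_zero).const_mul_atTop ha
    simpa [div_eq_mul_inv, inv_pow] using this
  have hlim := (hC.comp hτ).mul_const √a
  rw [zero_mul] at hlim
  refine hlim.congr' ?_
  filter_upwards [self_mem_nhdsWithin] with t (ht : 0 < t)
  have hsqrt : √|a / t ^ 2| = √a / t := by
    rw [abs_of_pos (by positivity), sqrt_div ha.le, sqrt_sq ht.le]
  have : 0 < √a := sqrt_pos.mpr ha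
  simp only [Function.comp_apply, hsqrt]
  field_simp

theorem rpow_div_sq_add_sq_rpow_half {t : ℝ} (ht : 0 < t) (s : ℝ) :
    t ^ s / (t ^ 2 + t ^ 2) ^ (s / 2) = (2 ^ (s / 2))⁻¹ := by
  have hsq : (t ^ 2) ^ (s / 2) = t ^ s := by
    rw [← rpow_natCast t 2, ← rpow_mul ht.le]
    congr 1
    push_cast
    ring
  rw [← two_mul, mul_rpow zero_le_two (by positivity), hsq, div_mul_cancel_right₀
    (rpow_pos_of_pos ht s).ne']

theorem cos_mul_sub_nonpos_of_abs_sub_le {lam γ ν c t : ℝ} (hν : ν ≠ 0) (ht : 0 < t)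
    (hlam : |lam - (γ * t ^ 2 + ν * t ^ 4)| ≤ c * t ^ 5) (hct : 2 * c * t ≤ |ν|) :
    Real.cos (π / |ν| / t ^ 4 * (lam - γ * t ^ 2)) ≤ 0 := by
  have hνa : 0 < |ν| := abs_pos.mpr hν
  have hθ : 0 < π / |ν| / t ^ 4 := by positivity
  refine Real.cos_nonpos_of_abs_sub_le_of_abs_eq_pi (y := π / |ν| / t ^ 4 * (ν * t ^ 4)) ?_ ?_
  · have hy : π / |ν| / t ^ 4 * (ν * t ^ 4) = π * (ν / |ν|) := by field_simp
    rw [hy, abs_mul, abs_div, abs_abs, div_self hνa.ne', mul_one, abs_of_pos pi_pos]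
  · calc |π / |ν| / t ^ 4 * (lam - γ * t ^ 2) - π / |ν| / t ^ 4 * (ν * t ^ 4)|
        = π / |ν| / t ^ 4 * |lam - (γ * t ^ 2 + ν * t ^ 4)| := by
          rw [← mul_sub, abs_mul, abs_of_pos hθ, sub_sub]
      _ ≤ π / |ν| / t ^ 4 * (c * t ^ 5) := by gcongr
      _ = π * (2 * c * t) / (2 * |ν|) := by field_simp
      _ ≤ π * |ν| / (2 * |ν|) := by gcongr
      _ = π / 2 := by field_simp

namespace BSScheme

variable (S : BSScheme)

theorem E_apply_of_eigen {t lam : ℝ} {φ : S.H} (hd : φ ∈ (S.A t).domain)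
    (hφ : S.A t ⟨φ, hd⟩ = (lam : ℂ) • φ) (θ : ℝ) :
    S.E t θ φ = Complex.exp ((-(lam * θ) : ℝ) * Complex.I) • φ := by
  have hderiv : ∀ σ : ℝ, HasDerivAt (fun s : ℝ => S.E t s φ)
      ((-(lam * Complex.I)) • S.E t σ φ) σ := by
    intro σ
    refine (S.E_gen t σ ⟨φ, hd⟩).congr_deriv ?_
    rw [hφ, map_smul, smul_smul, neg_smul, mul_comm]
  rw [eq_cexp_mul_smul_of_hasDerivAt hderiv θ, S.E_zero]
  congr 2
  push_cast
  ring

theorem norm_E_apply_sub_smul_le {t lam : ℝ} {φ : S.H} (hd : φ ∈ (S.A t).domain)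
    (hφ : S.A t ⟨φ, hd⟩ = (lam : ℂ) • φ) (θ : ℝ) (u : S.H) :
    ‖S.E t θ u - Complex.exp ((-(lam * θ) : ℝ) * Complex.I) • u‖ ≤ 2 * ‖u - φ‖ := by
  set z := Complex.exp ((-(lam * θ) : ℝ) * Complex.I)
  have hsplit : S.E t θ u - z • u = S.E t θ (u - φ) - z • (u - φ) := by
    rw [map_sub, S.E_apply_of_eigen hd hφ, smul_sub]
    abel
  calc ‖S.E t θ u - z • u‖ ≤ ‖S.E t θ (u - φ)‖ + ‖z • (u - φ)‖ := hsplit ▸ norm_sub_le _ _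
    _ = 2 * ‖u - φ‖ := by
      rw [S.E_isometry, norm_smul, Complex.norm_exp_ofReal_mul_I]
      ring

end BSScheme

namespace SandScheme

variable (S : SandScheme)

theorem Minv_Mcl (u : S.H) : S.Minv (S.Mcl u) = u := S.Mm.symm_apply_apply u

theorem Mcl_Minv (u : S.Hh) : S.Mcl (S.Minv u) = u := S.Mm.apply_symm_apply u

theorem Mcl_mem_kerHat {u : S.H} (hu : u ∈ S.ker) : S.Mcl u ∈ S.kerHat := by
  obtain ⟨hd, h0⟩ := (S.ker_def u).1 hu
  exact (S.kerHat_def _).2 ⟨(S.dom_eq u).1 hd, (S.X₀_sand ⟨u, hd⟩).symm.trans h0⟩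

theorem Minv_mem_ker {u : S.Hh} (hu : u ∈ S.kerHat) : S.Minv u ∈ S.ker := by
  obtain ⟨hd, h0⟩ := (S.kerHat_def u).1 hu
  have hd' : S.Minv u ∈ S.X₀.domain := (S.dom_eq _).2 (by rwa [← S.Mcl_Minv u] at hd)
  refine (S.ker_def _).2 ⟨hd', ?_⟩
  rw [S.X₀_sand ⟨S.Minv u, hd'⟩, ← h0]
  exact congrArg S.Xh₀ (Subtype.ext (S.Mcl_Minv u))

theorem X₁_comp_Minv : S.X₁ ∘L S.Minv = S.Xh₁ := by
  ext u
  rw [comp_apply, S.X₁_sand]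
  exact congrArg S.Xh₁ (S.Mcl_Minv u)

theorem P_comp_Minv_comp_Ph : S.P ∘L S.Minv ∘L S.Ph = S.Minv ∘L S.Ph := by
  ext u
  exact S.P_fix _ (S.Minv_mem_ker (S.Ph_mem u))

theorem germHat_eq :
    S.germHat = S.Ph ∘L adjoint S.Minv ∘L S.germ ∘L S.Minv ∘L S.Ph := by
  have hP : adjoint S.P = S.P := S.P_sa.adjoint_eq
  have hPh : adjoint S.Ph = S.Ph := S.Ph_sa.adjoint_eq
  have hPMP : S.Ph ∘L adjoint S.Minv ∘L S.P = S.Ph ∘L adjoint S.Minv := by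
    simpa only [adjoint_comp, hP, hPh, comp_assoc] using congrArg adjoint S.P_comp_Minv_comp_Ph
  calc S.germHat = S.Ph ∘L adjoint (S.X₁ ∘L S.Minv) ∘L S.Pstar ∘L (S.X₁ ∘L S.Minv) ∘L S.Ph := by
        rw [X₁_comp_Minv]; rfl
    _ = (S.Ph ∘L adjoint S.Minv ∘L S.P) ∘L adjoint S.X₁ ∘L S.Pstar ∘L S.X₁ ∘L
          (S.P ∘L S.Minv ∘L S.Ph) := by
        rw [hPMP, P_comp_Minv_comp_Ph, adjoint_comp]
        simp only [comp_assoc]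
    _ = S.Ph ∘L adjoint S.Minv ∘L S.germ ∘L S.Minv ∘L S.Ph := by
        simp only [BSScheme.germ, comp_assoc]

theorem M₀inv_mem_kerHat {u : S.Hh} (hu : u ∈ S.kerHat) : S.M₀inv u ∈ S.kerHat := by
  have hcomm : S.M₀inv (S.Ph u) = S.Ph (S.M₀inv u) := congr($S.M₀inv_comm u)
  rw [S.Ph_fix u hu] at hcomm
  exact hcomm ▸ S.Ph_mem _

theorem M₀_M₀inv {u : S.Hh} (hu : u ∈ S.kerHat) : S.M₀ (S.M₀inv u) = u := by
  simpa only [S.Ph_fix u hu] using S.M₀_inv_left u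

theorem Ph_adjoint_Minv_Minv_M₀_M₀ {ξ : S.Hh} (hξ : ξ ∈ S.kerHat) :
    S.Ph (adjoint S.Minv (S.Minv (S.M₀ (S.M₀ ξ)))) = ξ := by
  have h := S.M₀_sq ξ
  rw [S.Ph_fix ξ hξ] at h
  exact h

variable (SD : SpecData S.toBSScheme)

theorem M₀_germHat_M₀_apply_M₀inv_Mcl (j : Fin S.n) :
    (S.M₀ ∘L S.germHat ∘L S.M₀) (S.M₀inv (S.Mcl (SD.ω j)))
      = (SD.γ j : ℂ) • S.M₀inv (S.Mcl (SD.ω j)) := by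
  have hx : S.Mcl (SD.ω j) ∈ S.kerHat := S.Mcl_mem_kerHat (SD.ω_mem j)
  have hη := S.M₀inv_mem_kerHat hx
  set ξ := S.M₀inv (S.M₀inv (S.Mcl (SD.ω j)))
  -- `Q_𝔑̂ M₀² = 1` on `𝔑̂`, read at `ξ = M₀⁻² M ω_j`
  have hξ : S.Ph (adjoint S.Minv (SD.ω j)) = ξ := by
    rw [← S.Minv_Mcl (SD.ω j), ← S.M₀_M₀inv hx, ← S.M₀_M₀inv hη]
    exact S.Ph_adjoint_Minv_Minv_M₀_M₀ (S.M₀inv_mem_kerHat hη)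
  rw [comp_apply, comp_apply, S.M₀_M₀inv hx, germHat_eq]
  simp only [comp_apply, S.Ph_fix _ hx, Minv_Mcl, SD.germ_eig, map_smul, hξ]
  rw [S.M₀_M₀inv hη]

theorem M₀_exp_smul_apply_M₀inv_Mcl (j : Fin S.n) (c : ℂ) :
    S.M₀ (NormedSpace.exp (c • (S.M₀ ∘L S.germHat ∘L S.M₀)) (S.M₀inv (S.Mcl (SD.ω j))))
      = Complex.exp (c * SD.γ j) • S.Mcl (SD.ω j) := by
  have hx : S.Mcl (SD.ω j) ∈ S.kerHat := S.Mcl_mem_kerHat (SD.ω_mem j)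
  rw [NormedSpace.exp_apply_of_apply_eq_smul (a := c * SD.γ j), map_smul, S.M₀_M₀inv hx]
  rw [smul_apply, S.M₀_germHat_M₀_apply_M₀inv_Mcl SD j, smul_smul]

def expDefect (τ t ε : ℝ) : S.Hh →L[ℂ] S.Hh :=
  (S.Mcl ∘L S.E t (τ / ε ^ 2) ∘L S.Minv
      - S.M₀ ∘L NormedSpace.exp
          (((-Complex.I) * ((τ / ε ^ 2 * t ^ 2 : ℝ) : ℂ))
            • (S.M₀ ∘L S.germHat ∘L S.M₀)) ∘L S.M₀inv)
      ∘L S.Ph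

theorem norm_expDefect_apply_Mcl_sub_smul_le (j : Fin S.n) {t : ℝ} (ht : |t| ≤ SD.tstar)
    (τ ε : ℝ) :
    ‖S.expDefect τ t ε (S.Mcl (SD.ω j))
      - (Complex.exp ((-(SD.lam j t * (τ / ε ^ 2)) : ℝ) * Complex.I)
          - Complex.exp ((-(τ / ε ^ 2 * t ^ 2 * SD.γ j) : ℝ) * Complex.I)) • S.Mcl (SD.ω j)‖
      ≤ 2 * ‖S.Mcl‖ * ‖SD.ω j - SD.φ j t‖ := by
  obtain ⟨hd, heig⟩ := SD.φ_eig j t ht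
  have hx : S.Mcl (SD.ω j) ∈ S.kerHat := S.Mcl_mem_kerHat (SD.ω_mem j)
  have hgerm := S.M₀_exp_smul_apply_M₀inv_Mcl SD j (-Complex.I * ((τ / ε ^ 2 * t ^ 2 : ℝ) : ℂ))
  have hphase : -Complex.I * ((τ / ε ^ 2 * t ^ 2 : ℝ) : ℂ) * SD.γ j
      = ((-(τ / ε ^ 2 * t ^ 2 * SD.γ j) : ℝ) : ℂ) * Complex.I := by
    push_cast
    ring
  rw [hphase] at hgerm
  have hsplit : S.expDefect τ t ε (S.Mcl (SD.ω j))
      - (Complex.exp ((-(SD.lam j t * (τ / ε ^ 2)) : ℝ) * Complex.I)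
          - Complex.exp ((-(τ / ε ^ 2 * t ^ 2 * SD.γ j) : ℝ) * Complex.I)) • S.Mcl (SD.ω j)
      = S.Mcl (S.E t (τ / ε ^ 2) (SD.ω j)
          - Complex.exp ((-(SD.lam j t * (τ / ε ^ 2)) : ℝ) * Complex.I) • SD.ω j) := by
    simp only [expDefect, sub_apply, comp_apply, S.Ph_fix _ hx, Minv_Mcl, hgerm, map_sub,
      map_smul, sub_smul]
    abel
  rw [hsplit]
  calc _ ≤ ‖S.Mcl‖ * ‖S.E t (τ / ε ^ 2) (SD.ω j)
          - Complex.exp ((-(SD.lam j t * (τ / ε ^ 2)) : ℝ) * Complex.I) • SD.ω j‖ :=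
        S.Mcl.le_opNorm _
    _ ≤ ‖S.Mcl‖ * (2 * ‖SD.ω j - SD.φ j t‖) := by
        gcongr
        exact S.norm_E_apply_sub_smul_le hd heig _ _
    _ = 2 * ‖S.Mcl‖ * ‖SD.ω j - SD.φ j t‖ := by ring

theorem one_half_le_norm_expDefect {j : Fin S.n} (hν : SD.ν j ≠ 0) {cφ c t : ℝ} (ht : 0 < t)
    (hts : |t| ≤ SD.tstar) (hφ : ‖SD.ω j - SD.φ j t‖ ≤ cφ * t)
    (hlam : |SD.lam j t - (SD.γ j * t ^ 2 + SD.ν j * t ^ 4)| ≤ c * t ^ 5)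
    (hct : 2 * c * t ≤ |SD.ν j|) (hsmall : 4 * ‖S.Mcl‖ * ‖S.Minv‖ * cφ * t ≤ 1) :
    1 / 2 ≤ ‖S.expDefect (π / |SD.ν j| / t ^ 2) t t‖ := by
  set x := S.Mcl (SD.ω j)
  have hx : 1 ≤ ‖S.Minv‖ * ‖x‖ := by
    calc (1 : ℝ) = ‖S.Minv x‖ := by rw [S.Minv_Mcl, SD.ω_orthonormal.1 j]
      _ ≤ ‖S.Minv‖ * ‖x‖ := S.Minv.le_opNorm x
  have hx0 : x ≠ 0 := fun h => by simp [h] at hx; linarith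
  have hcφ : 0 ≤ cφ := nonneg_of_mul_nonneg_left ((norm_nonneg _).trans hφ) ht
  have hphase : Real.cos (-(SD.lam j t * (π / |SD.ν j| / t ^ 2 / t ^ 2))
      - -(π / |SD.ν j| / t ^ 2 / t ^ 2 * t ^ 2 * SD.γ j)) ≤ 0 := by
    have harg : -(SD.lam j t * (π / |SD.ν j| / t ^ 2 / t ^ 2))
        - -(π / |SD.ν j| / t ^ 2 / t ^ 2 * t ^ 2 * SD.γ j)
        = -(π / |SD.ν j| / t ^ 4 * (SD.lam j t - SD.γ j * t ^ 2)) := by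
      field_simp
      ring
    rw [harg, Real.cos_neg]
    exact cos_mul_sub_nonpos_of_abs_sub_le hν ht hlam hct
  have hrem := S.norm_expDefect_apply_Mcl_sub_smul_le SD j hts (π / |SD.ν j| / t ^ 2) t
  have hrem_le : 2 * ‖S.Mcl‖ * ‖SD.ω j - SD.φ j t‖ ≤ 1 / 2 * ‖x‖ :=
    calc 2 * ‖S.Mcl‖ * ‖SD.ω j - SD.φ j t‖ ≤ 2 * ‖S.Mcl‖ * (cφ * t) := by gcongr
      _ ≤ 2 * ‖S.Mcl‖ * (cφ * t) * (‖S.Minv‖ * ‖x‖) :=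
        le_mul_of_one_le_right (by positivity) hx
      _ ≤ 1 / 2 * ‖x‖ := by nlinarith [norm_nonneg x]
  have hbound := (S.expDefect _ t t).norm_sub_le_opNorm_of_norm_apply_sub_smul_le
    hx0 (hrem.trans hrem_le)
  linarith [Complex.one_le_norm_exp_mul_I_sub_exp_mul_I hphase]

theorem eventually_one_half_le_norm_expDefect {j : Fin S.n} (hμ : SD.μ j = 0)
    (hν : SD.ν j ≠ 0) :
    ∀ᶠ t in 𝓝[>] 0, 1 / 2 ≤ ‖S.expDefect (π / |SD.ν j| / t ^ 2) t t‖ := by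
  obtain ⟨cφ, hcφ⟩ := SD.φ_expansion
  obtain ⟨c, hc⟩ := SD.lam_expansion
  filter_upwards [self_mem_nhdsWithin, eventually_mul_le_nhdsGT 1 SD.tstar_pos,
    eventually_mul_le_nhdsGT (2 * c) (abs_pos.mpr hν),
    eventually_mul_le_nhdsGT (4 * ‖S.Mcl‖ * ‖S.Minv‖ * cφ) one_pos] with t (ht : 0 < t) hts hct hsmall
  have hts : |t| ≤ SD.tstar := by rw [abs_of_pos ht]; linarith
  refine S.one_half_le_norm_expDefect SD hν ht hts ?_ ?_ hct hsmall
  · simpa only [norm_sub_rev, abs_of_pos ht] using hcφ j t hts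
  · simpa only [hμ, abs_of_pos ht, zero_mul, add_zero] using hc j t hts

end SandScheme

theorem sandwiched_exp_time_sharp_enhanced_general (S : SandScheme) (SD : SpecData S.toBSScheme)
    (hμ : ∀ l, SD.μ l = 0) (hν : ∃ j, SD.ν j ≠ 0)
    (s : ℝ) :
    ¬ ∃ C : ℝ → ℝ, (∀ τ, 0 < C τ) ∧
        Filter.Tendsto (fun τ : ℝ => C τ / Real.sqrt |τ|) Filter.atTop (nhds 0) ∧
        ∃ t₁ > (0 : ℝ), ∃ ε₁ > (0 : ℝ), ∀ τ t ε : ℝ,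
          |t| ≤ t₁ → 0 < ε → ε ≤ ε₁ →
          ‖(S.Mcl ∘L S.E t (τ / ε ^ 2) ∘L S.Minv
              - S.M₀ ∘L NormedSpace.exp
                  (((-Complex.I) * ((τ / ε ^ 2 * t ^ 2 : ℝ) : ℂ))
                    • (S.M₀ ∘L S.germHat ∘L S.M₀)) ∘L S.M₀inv)
              ∘L S.Ph‖ * (ε ^ s / (t ^ 2 + ε ^ 2) ^ (s / 2)) ≤ C τ * ε := by
  rintro ⟨C, -, hC, t₁, ht₁, ε₁, hε₁, hbound⟩
  obtain ⟨j, hνj⟩ := hν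
  have hCsmall : ∀ᶠ t in 𝓝[>] 0, C (π / |SD.ν j| / t ^ 2) * t < (2 ^ (s / 2))⁻¹ / 2 :=
    (tendsto_mul_self_of_tendsto_div_sqrt (by positivity) hC).eventually_lt_const (by positivity)
  obtain ⟨t, ⟨ht, htmin⟩, hD, hCt⟩ := ((show ∀ᶠ t in 𝓝[>] 0, t ∈ Set.Ioo 0 (min t₁ ε₁) from
    Ioo_mem_nhdsGT (lt_min ht₁ hε₁)).and
    ((S.eventually_one_half_le_norm_expDefect SD (hμ j) hνj).and hCsmall)).exists
  have hb : ‖S.expDefect (π / |SD.ν j| / t ^ 2) t t‖ * (t ^ s / (t ^ 2 + t ^ 2) ^ (s / 2))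
      ≤ C (π / |SD.ν j| / t ^ 2) * t :=
    hbound _ t t (by rw [abs_of_pos ht]; linarith [min_le_left t₁ ε₁]) ht
      (by linarith [min_le_right t₁ ε₁])
  rw [rpow_div_sq_add_sq_rpow_half ht] at hb
  have hpos : (0 : ℝ) < (2 ^ (s / 2))⁻¹ := by positivity
  linarith [mul_le_mul_of_nonneg_right hD hpos.le]

/-- Assume the nondegeneracy condition `A(t) ≥ c⁎ t² I` for
`|t| ≤ t⁰`. Suppose `N̂_{0,Q} = 0` and `𝒩̂_Q^{(q)} ≠ 0` for some `q`, i.e. in the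
eigenvalue expansions `λ_l(t) = γ_l t² + μ_l t³ + ν_l t⁴ + …` one has `μ_l = 0`
for all `l` while `ν_j ≠ 0` for some `j`. Let `s ≥ 2`. Then there is no positive
function `C(τ)` with `lim_{τ→∞} C(τ)/|τ|^{1/2} = 0` such that
`‖M e^{-iτε⁻²A(t)} M⁻¹ P̂ − M₀ e^{-iτε⁻²t² M₀ Ŝ M₀} M₀⁻¹ P̂‖ εˢ(t²+ε²)^{-s/2}
  ≤ C(τ) ε` for all `τ ∈ ℝ` and all sufficiently small `|t|` and `ε > 0`. -/
theorem sandwiched_exp_time_sharp_enhanced (S : SandScheme) (SD : SpecData S.toBSScheme)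
    (cstar : ℝ) (hcstar : 0 < cstar)
    (hnondeg : ∀ t : ℝ, |t| ≤ S.t0 → ∀ u : (S.A t).domain,
      cstar * t ^ 2 * ‖(u : S.H)‖ ^ 2 ≤ (inner ℂ ((S.A t) u) (u : S.H) : ℂ).re)
    (hN0Q : S.NhatQ0 SD = 0)
    (hμ : ∀ l, SD.μ l = 0) (hν : ∃ j, SD.ν j ≠ 0)
    (s : ℝ) (hs : 2 ≤ s) :
    ¬ ∃ C : ℝ → ℝ, (∀ τ, 0 < C τ) ∧
        Filter.Tendsto (fun τ : ℝ => C τ / Real.sqrt |τ|) Filter.atTop (nhds 0) ∧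
        ∃ t₁ > (0 : ℝ), ∃ ε₁ > (0 : ℝ), ∀ τ t ε : ℝ,
          |t| ≤ t₁ → 0 < ε → ε ≤ ε₁ →
          ‖(S.Mcl ∘L S.E t (τ / ε ^ 2) ∘L S.Minv
              - S.M₀ ∘L NormedSpace.exp
                  (((-Complex.I) * ((τ / ε ^ 2 * t ^ 2 : ℝ) : ℂ))
                    • (S.M₀ ∘L S.germHat ∘L S.M₀)) ∘L S.M₀inv)
              ∘L S.Ph‖ * (ε ^ s / (t ^ 2 + ε ^ 2) ^ (s / 2)) ≤ C τ * ε :=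
  sandwiched_exp_time_sharp_enhanced_general S SD hμ hν s
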